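/- arXiv:0911.3674 — 2 statements merged into one kernel-verified Lean document; each statement's English description precedes it below -/
import Mathlib

section
/- If ⟨F,A,C⟩ is a constrained formula of order n and ⟨F,A,C⟩ derives into ⟨G,A,C⟩ by one application of any of the inference rules Remove-insat1, Remove-insat2, Remove-sat1, Remove-sat2, Decompose, Decrease-height, or Remove-height, then ⟨G,A,C⟩ is a constrained formula of order n and Sol(⟨G,A,C⟩) = Sol(⟨F,A,C⟩). -/
namespace RITRC

/-- Terms over a signature (symbols `F` with arities `ar`) with variables in `V`. -/
inductive Term (F : Type) (ar : F → ℕ) (V : Type) : Type where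
  | var : V → Term F ar V
  | app : (f : F) → (Fin (ar f) → Term F ar V) → Term F ar V

/-- Ground terms (terms without variables). -/
abbrev GTerm (F : Type) (ar : F → ℕ) : Type := Term F ar Empty

variable {F V V' Q : Type} {ar : F → ℕ}

/-- Applying a substitution to a term. -/
def Term.subst (φ : V → Term F ar V') : Term F ar V → Term F ar V'
  | .var x => φ x
  | .app f ts => .app f (fun i => (ts i).subst φ)

/-- The height of a term. -/
def Term.height : Term F ar V → ℕ
  | .var _ => 0
  | .app _ ts => Finset.univ.sup (fun i => (ts i).height + 1)

/-- The size of a term. -/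
def Term.size : Term F ar V → ℕ
  | .var _ => 1
  | .app _ ts => 1 + ∑ i, (ts i).size

/-- The subterm of a term at a position (a list of child indices), if it exists. -/
def Term.sub : Term F ar V → List ℕ → Option (Term F ar V)
  | t, [] => some t
  | .var _, _ :: _ => none
  | .app f ts, i :: p => if h : i < ar f then (ts ⟨i, h⟩).sub p else none

/-- The root symbol of a term: a function symbol or a variable. -/
def Term.rootSym : Term F ar V → F ⊕ V
  | .var x => .inr x
  | .app f _ => .inl f

/-- `p` is a position of `t`. -/
def Term.isPos (t : Term F ar V) (p : List ℕ) : Prop := t.sub p ≠ none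

/-- `p` is a variable position of `t`. -/
def Term.isVarPos (t : Term F ar V) (p : List ℕ) : Prop :=
  ∃ x, t.sub p = some (Term.var x)

/-- `p` is a non-variable position of `t`. -/
def Term.isNonVarPos (t : Term F ar V) (p : List ℕ) : Prop :=
  ∃ f ts, t.sub p = some (Term.app f ts)

/-- The variable `x` occurs in `t`. -/
def Term.varOccurs (t : Term F ar V) (x : V) : Prop :=
  ∃ p, t.sub p = some (Term.var x)

/-- The variable `x` occurs at least twice in `t`. -/
def Term.occursTwice (t : Term F ar V) (x : V) : Prop :=
  ∃ p q, p ≠ q ∧ t.sub p = some (Term.var x) ∧ t.sub q = some (Term.var x)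

/-- `t` is determined at position `p`: either `p` is a non-variable position
of `t`, or some prefix of `p` is labeled by a constant symbol. -/
def Term.determinedAt (t : Term F ar V) (p : List ℕ) : Prop :=
  t.isNonVarPos p ∨ ∃ p', p' <+: p ∧ ∃ f ts, t.sub p' = some (Term.app f ts) ∧ ar f = 0

/-- A deterministic tree automaton: at most one transition `f(q₁,…,qₖ) → q`
for every `f` and states `q₁,…,qₖ`. -/
structure DTA (F : Type) (ar : F → ℕ) (Q : Type) : Type where
  δ : (f : F) → (Fin (ar f) → Q) → Option Q

/-- Collect a family of optional values into an optional family. -/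
def allSome {n : ℕ} {α : Type} (g : Fin n → Option α) : Option (Fin n → α) :=
  if h : ∀ i, (g i).isSome then some (fun i => (g i).get (h i)) else none

/-- The state reached by `A` on a term, where variables are pre-assigned states by `C`. -/
def DTA.runC (A : DTA F ar Q) (C : V → Q) : Term F ar V → Option Q
  | .var x => some (C x)
  | .app f ts => (allSome (fun i => A.runC C (ts i))).bind (A.δ f)

/-- The state reached by `A` on a ground term. -/
def DTA.run (A : DTA F ar Q) : GTerm F ar → Option Q :=
  A.runC (fun x => x.elim)

/-- `L(A,q)`: the set of ground terms on which `A` reaches state `q`. -/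
def DTA.lang (A : DTA F ar Q) (q : Q) : Set (GTerm F ar) :=
  {t | A.run t = some q}

/-- `A` is complete. -/
def DTA.Complete (A : DTA F ar Q) : Prop :=
  ∀ (f : F) (qs : Fin (ar f) → Q), (A.δ f qs).isSome

/-- `A` is a 1-or-n DTA: each state has exactly one, or at least `n`, terms. -/
def DTA.OneOr (A : DTA F ar Q) (n : ℕ) : Prop :=
  ∀ q : Q, (A.lang q).encard = 1 ∨ (n : ℕ∞) ≤ (A.lang q).encard

/-- The number of transitions of a DTA. -/
noncomputable def DTA.numTrans [Fintype F] [Fintype Q] (A : DTA F ar Q) : ℕ :=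
  ∑ f : F, ∑ qs : Fin (ar f) → Q, if (A.δ f qs).isSome then 1 else 0

/-- A set of ground terms is regular if it is recognized by some (finite) DTA. -/
def IsRegular (L : Set (GTerm F ar)) : Prop :=
  ∃ (Q : Type) (_ : Fintype Q) (A : DTA F ar Q) (Facc : Set Q),
    L = {t | ∃ q ∈ Facc, A.run t = some q}

/-- A DTA bundled with its (finite) state type and accepting states. -/
structure NDTA (F : Type) (ar : F → ℕ) : Type 1 where
  Q : Type
  fin : Fintype Q
  A : DTA F ar Q
  acc : Set Q

/-- The language recognized by a bundled DTA. -/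
def NDTA.lang (N : NDTA F ar) : Set (GTerm F ar) :=
  {t | ∃ q ∈ N.acc, N.A.run t = some q}

/-- The size of a bundled DTA: number of states plus sum of sizes of transitions. -/
noncomputable def NDTA.size [Fintype F] (N : NDTA F ar) : ℕ :=
  letI := N.fin
  Fintype.card N.Q +
    ∑ f : F, ∑ qs : Fin (ar f) → N.Q, if (N.A.δ f qs).isSome then ar f + 2 else 0

/-- `L(⟨S,M⟩)`: the language of a set of terms `S` with regular constraints `M`. -/
def langM (S : Set (Term F ar V)) (M : V → NDTA F ar) : Set (GTerm F ar) :=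
  {t | ∃ s ∈ S, ∃ φ : V → GTerm F ar, (∀ x, φ x ∈ (M x).lang) ∧ t = s.subst φ}

/-- `L(⟨S,R⟩)` for a single regular constraint `R = ⟨A,C⟩`. -/
def langSingle (S : Set (Term F ar V)) (A : DTA F ar Q) (C : V → Q) :
    Set (GTerm F ar) :=
  {t | ∃ s ∈ S, ∃ φ : V → GTerm F ar, (∀ x, A.run (φ x) = some (C x)) ∧ t = s.subst φ}

/-- A restricted regular constraint `R = ⟨A,V,C,W,h⟩`. -/
structure RRC (F : Type) (ar : F → ℕ) (V Q : Type) : Type where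
  A : DTA F ar Q
  C : V → Q
  W : Set V
  hgt : ℕ

/-- A solution of a restricted regular constraint. -/
def RRC.IsSolution (R : RRC F ar V Q) (φ : V → GTerm F ar) : Prop :=
  (∀ x, R.A.run (φ x) = some (R.C x)) ∧ ∀ x ∈ R.W, (φ x).height ≤ R.hgt

/-- `L(⟨S,R⟩)` for a restricted regular constraint `R`. -/
def RRC.lang (R : RRC F ar V Q) (S : Set (Term F ar V)) : Set (GTerm F ar) :=
  {t | ∃ s ∈ S, ∃ φ, R.IsSolution φ ∧ t = s.subst φ}

/-- Renaming the variables of a term. -/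
def Term.rename (ρ : V → V') (t : Term F ar V) : Term F ar V' :=
  t.subst (fun x => Term.var (ρ x))

/-- `s` and `t` are structurally similar: `t` is obtained from `s` by an
injective variable renaming. -/
def StructSim (s : Term F ar V) (t : Term F ar V') : Prop :=
  ∃ ρ : V → V', Function.Injective ρ ∧ t = s.rename ρ

/-- `s` and `t` are structurally equal with respect to the state assignment `C`. -/
def StructEq (C : V → Q) (s t : Term F ar V) : Prop :=
  StructSim s t ∧
    ∀ p x y, s.sub p = some (Term.var x) → t.sub p = some (Term.var y) → C x = C y

/-- `s` is structurally subsumed by `t` (with respect to `A` and `C`). -/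
def StructSub (A : DTA F ar Q) (C : V → Q) (s t : Term F ar V) : Prop :=
  (∀ p f ts, t.sub p = some (Term.app f ts) →
    ∃ sp, s.sub p = some sp ∧ sp.rootSym = Sum.inl f) ∧
  (∀ p tp, t.sub p = some tp → ∃ sp, s.sub p = some sp ∧ A.runC C tp = A.runC C sp)

/-- Building a binary term `f(t,u)` from a symbol of arity 2. -/
def mkBin {f : F} (h : ar f = 2) (t u : Term F ar V) : Term F ar V :=
  Term.app f (fun i => if (i : ℕ) = 0 then t else u)

/-- `s` satisfies the infinite-instances property in `⟨S,R⟩`. -/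
def InfiniteInstances (R : RRC F ar V Q) (S : Set (Term F ar V)) (s : Term F ar V) :
    Prop :=
  ∃ x, s.occursTwice x ∧
    ∃ φ : ℕ → (V → GTerm F ar),
      (∀ i, R.IsSolution (φ i)) ∧
      (∀ i, s.subst (φ i) ∉ R.lang (S \ {s})) ∧
      (∀ i j, i ≠ j → φ i x ≠ φ j x)

/-- The set of prefixes of a finite set of positions. -/
def prefixes (P : Finset (List ℕ)) : Finset (List ℕ) :=
  P.biUnion (fun p => p.inits.toFinset)


/-- Predicates of formulas: inequalities `s ≠ t` and height predicates `height s > h`. -/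
inductive Pred (F : Type) (ar : F → ℕ) (V : Type) : Type where
  | neq : Term F ar V → Term F ar V → Pred F ar V
  | hgt : Term F ar V → ℕ → Pred F ar V

/-- A conjunction of predicates. -/
abbrev Conj (F : Type) (ar : F → ℕ) (V : Type) : Type := List (Pred F ar V)

/-- A formula with inequality and height predicates:
a disjunction of conjunctions of predicates. -/
abbrev Formula (F : Type) (ar : F → ℕ) (V : Type) : Type := List (Conj F ar V)

/-- Truth of a predicate under a substitution. -/
def Pred.holds (φ : V → GTerm F ar) : Pred F ar V → Prop
  | .neq s t => s.subst φ ≠ t.subst φ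
  | .hgt s h => h < (s.subst φ).height

/-- Truth of a conjunction under a substitution. -/
def Conj.holds (φ : V → GTerm F ar) (c : Conj F ar V) : Prop :=
  ∀ p ∈ c, p.holds φ

/-- Truth of a formula under a substitution. -/
def Formula.holds (φ : V → GTerm F ar) (Fm : Formula F ar V) : Prop :=
  ∃ c ∈ Fm, Conj.holds φ c

/-- The set of solutions of a constrained formula `⟨F,A,C⟩`. -/
def SolF (A : DTA F ar Q) (C : V → Q) (Fm : Formula F ar V) :
    Set (V → GTerm F ar) :=
  {φ | (∀ x, A.run (φ x) = some (C x)) ∧ Fm.holds φ}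

/-- `⟨F,A,C⟩` is a constrained formula of order `n`: `A` is a 1-or-(n+1) DTA,
every conjunction has at most `n` predicates, and every height predicate
`height s > h` satisfies `h ≥ |Q| + height s`. -/
def IsOrder [Fintype Q] (A : DTA F ar Q) (C : V → Q) (n : ℕ)
    (Fm : Formula F ar V) : Prop :=
  A.OneOr (n + 1) ∧
  (∀ c ∈ Fm, c.length ≤ n) ∧
  (∀ c ∈ Fm, ∀ s h, Pred.hgt s h ∈ c → Fintype.card Q + Term.height s ≤ h)

/-- One step of the inference system transforming constrained formulas. -/
inductive Derives [Fintype Q] (A : DTA F ar Q) (C : V → Q) :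
    Formula F ar V → Formula F ar V → Prop where
  /-- Remove-insat1: delete a conjunction containing `t ≠ t`. -/
  | removeInsat1 (F₁ F₂ : Formula F ar V) (c₁ c₂ : Conj F ar V) (t : Term F ar V) :
      Derives A C (F₁ ++ (c₁ ++ Pred.neq t t :: c₂) :: F₂) (F₁ ++ F₂)
  /-- Remove-insat2: delete a conjunction containing `s^q ≠ t^q` with `|L(A,q)| = 1`. -/
  | removeInsat2 (F₁ F₂ : Formula F ar V) (c₁ c₂ : Conj F ar V) (s t : Term F ar V)
      (q : Q) (hs : A.runC C s = some q) (ht : A.runC C t = some q)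
      (hq : (A.lang q).encard = 1) :
      Derives A C (F₁ ++ (c₁ ++ Pred.neq s t :: c₂) :: F₂) (F₁ ++ F₂)
  /-- Remove-sat1: remove a predicate `s^q ≠ t^{q'}` with `q ≠ q'`, or with
  distinct non-variable root symbols. -/
  | removeSat1 (F₁ F₂ : Formula F ar V) (c₁ c₂ : Conj F ar V) (s t : Term F ar V)
      (h : (∃ q q', A.runC C s = some q ∧ A.runC C t = some q' ∧ q ≠ q') ∨
           (∃ f g, s.rootSym = Sum.inl f ∧ t.rootSym = Sum.inl g ∧ f ≠ g)) :
      Derives A C (F₁ ++ (c₁ ++ Pred.neq s t :: c₂) :: F₂) (F₁ ++ (c₁ ++ c₂) :: F₂)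
  /-- Remove-sat2: remove a predicate `x^q ≠ t^q` where `t ≠ x` and `x` occurs in `t`. -/
  | removeSat2 (F₁ F₂ : Formula F ar V) (c₁ c₂ : Conj F ar V) (s t : Term F ar V)
      (q : Q) (hs : A.runC C s = some q) (ht : A.runC C t = some q)
      (h : (∃ x, s = Term.var x ∧ t ≠ Term.var x ∧ t.varOccurs x) ∨
           (∃ x, t = Term.var x ∧ s ≠ Term.var x ∧ s.varOccurs x)) :
      Derives A C (F₁ ++ (c₁ ++ Pred.neq s t :: c₂) :: F₂) (F₁ ++ (c₁ ++ c₂) :: F₂)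
  /-- Decompose: replace `f^q(s₁,…,sₘ) ≠ f^q(t₁,…,tₘ)` by the disjunction over `i`
  of the conjunctions with the predicate replaced by `sᵢ ≠ tᵢ`. -/
  | decompose (F₁ F₂ : Formula F ar V) (c₁ c₂ : Conj F ar V) (f : F)
      (ss ts : Fin (ar f) → Term F ar V) (q : Q)
      (hs : A.runC C (Term.app f ss) = some q) (ht : A.runC C (Term.app f ts) = some q) :
      Derives A C (F₁ ++ (c₁ ++ Pred.neq (Term.app f ss) (Term.app f ts) :: c₂) :: F₂)
        (F₁ ++ (List.ofFn fun i => c₁ ++ Pred.neq (ss i) (ts i) :: c₂) ++ F₂)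
  /-- Decrease-height: replace `height(f^q(s₁,…,sₘ)) > h`, for `L(A,q)` infinite and
  `h > |Q|`, by the disjunction over `i` of the conjunctions with the predicate
  replaced by `height sᵢ > h-1`. -/
  | decreaseHeight (F₁ F₂ : Formula F ar V) (c₁ c₂ : Conj F ar V) (f : F)
      (ss : Fin (ar f) → Term F ar V) (h : ℕ) (q : Q)
      (hq : A.runC C (Term.app f ss) = some q) (hinf : (A.lang q).Infinite)
      (hh : Fintype.card Q < h) :
      Derives A C (F₁ ++ (c₁ ++ Pred.hgt (Term.app f ss) h :: c₂) :: F₂)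
        (F₁ ++ (List.ofFn fun i => c₁ ++ Pred.hgt (ss i) (h - 1) :: c₂) ++ F₂)
  /-- Remove-height: delete a conjunction containing `height(s^q) > h` with
  `L(A,q)` finite and `h ≥ |Q|`. -/
  | removeHeight (F₁ F₂ : Formula F ar V) (c₁ c₂ : Conj F ar V) (s : Term F ar V)
      (h : ℕ) (q : Q) (hq : A.runC C s = some q) (hfin : (A.lang q).Finite)
      (hh : Fintype.card Q ≤ h) :
      Derives A C (F₁ ++ (c₁ ++ Pred.hgt s h :: c₂) :: F₂) (F₁ ++ F₂)

/-- A constrained formula is final if no inference rule applies to it. -/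
def IsFinal [Fintype Q] (A : DTA F ar Q) (C : V → Q) (Fm : Formula F ar V) : Prop :=
  ¬ ∃ G, Derives A C Fm G

/-!
Each rule either deletes a conjunction that no solution satisfies, deletes a predicate that
every solution satisfies, or splits a predicate into an equivalent disjunction over the
arguments of a symbol; none of these lengthens a conjunction, and the split height predicates
inherit the bound `h ≥ |Q| + height s`. The one non-syntactic step is Remove-height: if
`L(A,q)` is finite, every term of it has height `< |Q|`. Indeed, a tallest term of `L(A,q)`
has a child one level lower whose state `q'` has a finite language (children can be replaced
injectively inside the term), and the maximal height in `L(A,q')` is exactly one less than in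
`L(A,q)`. Descending, each of `0, …, maxHeight q` is the maximal height of a distinct state.
-/

namespace Term

variable {x y : V} {f : F} {ts : Fin (ar f) → Term F ar V}

lemma varOccurs_var : (var y : Term F ar V).varOccurs x ↔ y = x := by
  constructor
  · rintro ⟨_ | _, hp⟩ <;> simp_all [sub]
  · rintro rfl
    exact ⟨[], rfl⟩

lemma varOccurs_app : (app f ts).varOccurs x ↔ ∃ i, (ts i).varOccurs x := by
  constructor
  · rintro ⟨_ | ⟨i, p⟩, hp⟩
    · simp [sub] at hp
    · simp only [sub] at hp
      split at hp
      · exact ⟨_, p, hp⟩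
      · cases hp
  · rintro ⟨i, p, hp⟩
    exact ⟨i :: p, by simpa [sub] using hp⟩

lemma size_lt_size_app (i : Fin (ar f)) : (ts i).size < (app f ts).size := by
  have := Finset.single_le_sum (f := fun j => (ts j).size) (fun _ _ => Nat.zero_le _)
    (Finset.mem_univ i)
  simp only [size]
  omega

lemma size_le_size_subst_of_varOccurs (φ : V → Term F ar V') {t : Term F ar V}
    (h : t.varOccurs x) : (φ x).size ≤ (t.subst φ).size := by
  induction t with
  | var y => rw [varOccurs_var.1 h]; rfl
  | app f ts ih =>
    obtain ⟨i, hi⟩ := varOccurs_app.1 h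
    exact (ih i hi).trans (size_lt_size_app (ts := fun j => (ts j).subst φ) i).le

lemma size_lt_size_subst_of_varOccurs (φ : V → Term F ar V') {t : Term F ar V}
    (hne : t ≠ var x) (h : t.varOccurs x) : (φ x).size < (t.subst φ).size := by
  cases t with
  | var y => exact absurd (congrArg var (varOccurs_var.1 h)) hne
  | app f ts =>
    obtain ⟨i, hi⟩ := varOccurs_app.1 h
    exact (size_le_size_subst_of_varOccurs φ hi).trans_lt
      (size_lt_size_app (ts := fun j => (ts j).subst φ) i)

lemma subst_ne_of_varOccurs (φ : V → Term F ar V') {t : Term F ar V}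
    (hne : t ≠ var x) (h : t.varOccurs x) : φ x ≠ t.subst φ := fun heq =>
  (size_lt_size_subst_of_varOccurs φ hne h).ne (congrArg size heq)

lemma subst_ne_subst_of_rootSym_ne (φ : V → Term F ar V') {s t : Term F ar V} {f g : F}
    (hs : s.rootSym = .inl f) (ht : t.rootSym = .inl g) (hfg : f ≠ g) :
    s.subst φ ≠ t.subst φ := by
  cases s <;> cases t <;> simp_all [rootSym, subst]

lemma subst_app_ne_subst_app_iff (φ : V → Term F ar V') {ss : Fin (ar f) → Term F ar V} :
    (app f ss).subst φ ≠ (app f ts).subst φ ↔ ∃ i, (ss i).subst φ ≠ (ts i).subst φ := by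
  simp [subst, funext_iff]

lemma height_app_le (i : Fin (ar f)) : (ts i).height + 1 ≤ (app f ts).height :=
  Finset.le_sup (f := fun j => (ts j).height + 1) (Finset.mem_univ i)

lemma lt_height_app_iff {h : ℕ} (hh : 0 < h) :
    h < (app f ts).height ↔ ∃ i, h - 1 < (ts i).height := by
  simp only [height, Finset.lt_sup_iff, Finset.mem_univ, true_and]
  exact exists_congr fun i => by omega

lemma exists_height_add_one_eq (hpos : 0 < (app f ts).height) :
    ∃ i, (ts i).height + 1 = (app f ts).height := by
  obtain ⟨j, -, -⟩ := Finset.lt_sup_iff.1 (show 0 < Finset.univ.sup _ from hpos)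
  obtain ⟨i, -, hi⟩ := Finset.exists_mem_eq_sup Finset.univ ⟨j, Finset.mem_univ j⟩
    (fun i => (ts i).height + 1)
  exact ⟨i, hi.symm⟩

end Term

lemma allSome_eq_some_iff {n : ℕ} {α : Type} {g : Fin n → Option α} {v : Fin n → α} :
    allSome g = some v ↔ ∀ i, g i = some (v i) := by
  unfold allSome
  split_ifs with h
  · simp [funext_iff, Option.eq_some_iff_get_eq, h]
  · simp only [false_iff]
    push Not at h ⊢
    obtain ⟨i, hi⟩ := h
    exact ⟨i, by simp_all⟩

namespace DTA

variable (A : DTA F ar Q)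

lemma runC_app_eq_some {C : V → Q} {f : F} {ts : Fin (ar f) → Term F ar V} {q : Q} :
    A.runC C (.app f ts) = some q ↔
      ∃ qs, (∀ i, A.runC C (ts i) = some (qs i)) ∧ A.δ f qs = some q := by
  simp only [runC, Option.bind_eq_some_iff, allSome_eq_some_iff]

lemma runC_subst {C : V → Q} {C' : V' → Q} {φ : V → Term F ar V'}
    (hφ : ∀ x, A.runC C' (φ x) = some (C x)) (s : Term F ar V) :
    A.runC C' (s.subst φ) = A.runC C s := by
  induction s with
  | var x => exact hφ x
  | app f ts ih => simp only [Term.subst, runC, ih]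

/-- Only meaningful when `L(A,q)` is finite: `sSup` of an unbounded set of naturals is `0`. -/
noncomputable def maxHeight (q : Q) : ℕ := sSup (Term.height '' A.lang q)

variable {A} {q : Q}

lemma height_le_maxHeight (hfin : (A.lang q).Finite) {t : GTerm F ar} (ht : t ∈ A.lang q) :
    t.height ≤ A.maxHeight q :=
  le_csSup (hfin.image _).bddAbove ⟨t, ht, rfl⟩

lemma exists_height_eq_maxHeight (hfin : (A.lang q).Finite) (hpos : 0 < A.maxHeight q) :
    ∃ t ∈ A.lang q, t.height = A.maxHeight q := by
  rcases (Term.height '' A.lang q).eq_empty_or_nonempty with hempty | hne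
  · simp [maxHeight, hempty] at hpos
  · exact Nat.sSup_mem hne (hfin.image _).bddAbove

lemma exists_maxHeight_add_one_eq (hfin : (A.lang q).Finite) (hpos : 0 < A.maxHeight q) :
    ∃ q', (A.lang q').Finite ∧ A.maxHeight q' + 1 = A.maxHeight q := by
  obtain ⟨_ | ⟨f, ts⟩, ht, hth⟩ := exists_height_eq_maxHeight hfin hpos
  · contradiction
  obtain ⟨qs, hts, hδ⟩ := A.runC_app_eq_some.1 ht
  obtain ⟨i, hi⟩ := Term.exists_height_add_one_eq (hth ▸ hpos)
  have plug : ∀ u ∈ A.lang (qs i), Term.app f (Function.update ts i u) ∈ A.lang q := by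
    intro u hu
    refine A.runC_app_eq_some.2 ⟨qs, fun j => ?_, hδ⟩
    rcases eq_or_ne j i with rfl | hj
    · simpa [DTA.lang, DTA.run] using hu
    · simpa [Function.update_of_ne hj] using hts j
  have hfin' : (A.lang (qs i)).Finite := by
    refine Set.Finite.of_finite_image (hfin.subset (Set.image_subset_iff.2 plug)) ?_
    intro u _ v _ huv
    simpa using congrFun (by simpa using huv : Function.update ts i u = Function.update ts i v) i
  have hle : A.maxHeight (qs i) ≤ A.maxHeight q - 1 := by
    refine csSup_le ⟨_, ts i, hts i, rfl⟩ ?_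
    rintro _ ⟨u, hu, rfl⟩
    have := Term.height_app_le (ts := Function.update ts i u) i
    have := height_le_maxHeight hfin (plug u hu)
    simp only [Function.update_self] at *
    omega
  have hge := height_le_maxHeight hfin' (hts i)
  exact ⟨qs i, hfin', by omega⟩

variable [Fintype Q]

lemma maxHeight_lt_card (hfin : (A.lang q).Finite) : A.maxHeight q < Fintype.card Q := by
  have hit : ∀ d ≤ A.maxHeight q,
      ∃ q', (A.lang q').Finite ∧ A.maxHeight q' + d = A.maxHeight q := by
    intro d hd
    induction d with
    | zero => exact ⟨q, hfin, rfl⟩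
    | succ d ih =>
      obtain ⟨q', hfin', hq'⟩ := ih (by omega)
      obtain ⟨q'', hfin'', hq''⟩ := exists_maxHeight_add_one_eq hfin' (by omega)
      exact ⟨q'', hfin'', by omega⟩
  have hsub : Finset.range (A.maxHeight q + 1) ⊆ Finset.univ.image A.maxHeight := by
    intro k hk
    obtain ⟨q', -, hq'⟩ := hit (A.maxHeight q - k) (by omega)
    exact Finset.mem_image.2 ⟨q', Finset.mem_univ _, by rw [Finset.mem_range] at hk; omega⟩
  calc A.maxHeight q < (Finset.range (A.maxHeight q + 1)).card := by simp
    _ ≤ (Finset.univ.image A.maxHeight).card := Finset.card_le_card hsub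
    _ ≤ Fintype.card Q := Finset.card_image_le

lemma height_lt_card_of_finite (hfin : (A.lang q).Finite) {t : GTerm F ar} (ht : t ∈ A.lang q) :
    t.height < Fintype.card Q :=
  (height_le_maxHeight hfin ht).trans_lt (maxHeight_lt_card hfin)

end DTA

section Formula

variable {φ : V → GTerm F ar} {p : Pred F ar V} {c₁ c₂ : Conj F ar V} {F₁ F₂ : Formula F ar V}

@[simp] lemma Conj.holds_append : Conj.holds φ (c₁ ++ c₂) ↔ Conj.holds φ c₁ ∧ Conj.holds φ c₂ :=
  List.forall_mem_append

@[simp] lemma Conj.holds_cons : Conj.holds φ (p :: c₂) ↔ p.holds φ ∧ Conj.holds φ c₂ :=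
  List.forall_mem_cons

@[simp] lemma Formula.holds_cons {c : Conj F ar V} :
    Formula.holds φ (c :: F₂) ↔ Conj.holds φ c ∨ F₂.holds φ := by
  simp [Formula.holds]

@[simp] lemma Formula.holds_append : (F₁ ++ F₂).holds φ ↔ F₁.holds φ ∨ F₂.holds φ := by
  simp [Formula.holds, or_and_right, exists_or]

@[simp] lemma Formula.holds_ofFn {m : ℕ} {g : Fin m → Conj F ar V} :
    Formula.holds φ (List.ofFn g) ↔ ∃ i, Conj.holds φ (g i) := by
  simp [Formula.holds, List.mem_ofFn]

lemma Formula.holds_erase_conj_of_not_holds (hp : ¬ p.holds φ) :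
    (F₁ ++ F₂).holds φ ↔ (F₁ ++ (c₁ ++ p :: c₂) :: F₂).holds φ := by
  simp [hp]

lemma Formula.holds_erase_pred_of_holds (hp : p.holds φ) :
    (F₁ ++ (c₁ ++ c₂) :: F₂).holds φ ↔ (F₁ ++ (c₁ ++ p :: c₂) :: F₂).holds φ := by
  simp [hp]

lemma Formula.holds_split_pred_of_iff {m : ℕ} {ps : Fin m → Pred F ar V}
    (hp : p.holds φ ↔ ∃ i, (ps i).holds φ) :
    (F₁ ++ List.ofFn (fun i => c₁ ++ ps i :: c₂) ++ F₂).holds φ ↔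
      (F₁ ++ (c₁ ++ p :: c₂) :: F₂).holds φ := by
  simp [hp]

end Formula

section Rules

variable [Fintype Q] {A : DTA F ar Q} {C : V → Q} {n : ℕ} {Fm G F₁ F₂ : Formula F ar V}
  {p : Pred F ar V} {c₁ c₂ : Conj F ar V}

lemma IsOrder.of_forall_exists (hF : IsOrder A C n Fm)
    (hG : ∀ c ∈ G, ∃ d ∈ Fm, c.length ≤ d.length ∧ ∀ s h, Pred.hgt s h ∈ c →
      Pred.hgt s h ∈ d ∨ Fintype.card Q + s.height ≤ h) :
    IsOrder A C n G := by
  obtain ⟨hA, hlen, hhgt⟩ := hF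
  refine ⟨hA, fun c hc => ?_, fun c hc s h hsh => ?_⟩
  · obtain ⟨d, hd, hcd, -⟩ := hG c hc
    exact hcd.trans (hlen d hd)
  · obtain ⟨d, hd, -, hsd⟩ := hG c hc
    exact (hsd s h hsh).elim (hhgt d hd s h) id

lemma IsOrder.erase_conj {X : Conj F ar V} (hF : IsOrder A C n (F₁ ++ X :: F₂)) :
    IsOrder A C n (F₁ ++ F₂) :=
  hF.of_forall_exists fun c hc =>
    ⟨c, by simp only [List.mem_append, List.mem_cons] at hc ⊢; tauto, le_rfl,
      fun _ _ h => .inl h⟩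

lemma IsOrder.erase_pred (hF : IsOrder A C n (F₁ ++ (c₁ ++ p :: c₂) :: F₂)) :
    IsOrder A C n (F₁ ++ (c₁ ++ c₂) :: F₂) := by
  refine hF.of_forall_exists fun c hc => ?_
  simp only [List.mem_append, List.mem_cons] at hc
  rcases hc with hc | rfl | hc
  · exact ⟨c, by simp [hc], le_rfl, fun _ _ h => .inl h⟩
  · exact ⟨c₁ ++ p :: c₂, by simp, by simp, fun _ _ h => .inl (by
      simp only [List.mem_append, List.mem_cons] at h ⊢; tauto)⟩
  · exact ⟨c, by simp [hc], le_rfl, fun _ _ h => .inl h⟩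

lemma IsOrder.split_pred {m : ℕ} {ps : Fin m → Pred F ar V}
    (hps : ∀ i s h, ps i = Pred.hgt s h → Fintype.card Q + s.height ≤ h)
    (hF : IsOrder A C n (F₁ ++ (c₁ ++ p :: c₂) :: F₂)) :
    IsOrder A C n (F₁ ++ List.ofFn (fun i => c₁ ++ ps i :: c₂) ++ F₂) := by
  refine hF.of_forall_exists fun c hc => ?_
  simp only [List.mem_append, List.mem_ofFn] at hc
  rcases hc with (hc | ⟨i, rfl⟩) | hc
  · exact ⟨c, by simp [hc], le_rfl, fun _ _ h => .inl h⟩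
  · refine ⟨c₁ ++ p :: c₂, by simp, by simp, fun s h hsh => ?_⟩
    simp only [List.mem_append, List.mem_cons] at hsh
    rcases hsh with hsh | hsh | hsh
    · exact .inl (by simp [hsh])
    · exact .inr (hps i s h hsh.symm)
    · exact .inl (by simp [hsh])
  · exact ⟨c, by simp [hc], le_rfl, fun _ _ h => .inl h⟩

lemma Derives.isOrder (hd : Derives A C Fm G) (hF : IsOrder A C n Fm) : IsOrder A C n G := by
  cases hd with
  | removeInsat1 | removeInsat2 | removeHeight => exact hF.erase_conj
  | removeSat1 | removeSat2 => exact hF.erase_pred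
  | decompose => exact hF.split_pred fun _ _ _ h => nomatch h
  | decreaseHeight _ _ c₁ c₂ f ss h =>
    have hroot :=
      hF.2.2 (c₁ ++ Pred.hgt (Term.app f ss) h :: c₂) (by simp) (Term.app f ss) h (by simp)
    refine hF.split_pred fun i s h' hi => ?_
    obtain ⟨rfl, rfl⟩ := Pred.hgt.inj hi
    have := Term.height_app_le (ts := ss) i
    omega

lemma Derives.solF_eq (hd : Derives A C Fm G) : SolF A C G = SolF A C Fm := by
  refine Set.ext fun φ => and_congr_right fun hφ => ?_
  have hrun {s : Term F ar V} {q : Q} (hs : A.runC C s = some q) : A.run (s.subst φ) = some q :=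
    (A.runC_subst hφ s).trans hs
  cases hd with
  | removeInsat1 => exact Formula.holds_erase_conj_of_not_holds fun h => h rfl
  | removeInsat2 _ _ _ _ _ _ _ hs ht hq =>
    exact Formula.holds_erase_conj_of_not_holds fun h =>
      h (Set.encard_le_one_iff.1 hq.le _ _ (hrun hs) (hrun ht))
  | removeSat1 _ _ _ _ _ _ h =>
    refine Formula.holds_erase_pred_of_holds ?_
    rcases h with ⟨q, q', hs, ht, hq⟩ | ⟨f, g, hs, ht, hfg⟩
    · exact fun heq => hq (Option.some.inj ((hrun hs).symm.trans (heq ▸ hrun ht)))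
    · exact Term.subst_ne_subst_of_rootSym_ne φ hs ht hfg
  | removeSat2 _ _ _ _ _ _ _ _ _ h =>
    refine Formula.holds_erase_pred_of_holds ?_
    rcases h with ⟨x, rfl, hne, hx⟩ | ⟨x, rfl, hne, hx⟩
    · exact Term.subst_ne_of_varOccurs φ hne hx
    · exact (Term.subst_ne_of_varOccurs φ hne hx).symm
  | decompose => exact Formula.holds_split_pred_of_iff (Term.subst_app_ne_subst_app_iff φ)
  | decreaseHeight _ _ _ _ _ _ _ _ _ _ hh =>
    exact Formula.holds_split_pred_of_iff (Term.lt_height_app_iff (by omega))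
  | removeHeight _ _ _ _ _ _ _ hq hfin hh =>
    have := DTA.height_lt_card_of_finite hfin (hrun hq)
    exact Formula.holds_erase_conj_of_not_holds fun hlt => by
      simp only [Pred.holds] at hlt
      omega

end Rules

theorem derives_preserves_order_and_solutions_general {F V Q : Type} {ar : F → ℕ}
    [Fintype Q]
    (A : DTA F ar Q) (C : V → Q) (n : ℕ) (Fm G : Formula F ar V)
    (hF : IsOrder A C n Fm) (hd : Derives A C Fm G) :
    IsOrder A C n G ∧ SolF A C G = SolF A C Fm :=
  ⟨hd.isOrder hF, hd.solF_eq⟩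

/-- if `⟨F,A,C⟩` is a constrained formula of order `n` and it
derives into `⟨G,A,C⟩` by one application of an inference rule, then `⟨G,A,C⟩`
is a constrained formula of order `n` with the same set of solutions. -/
theorem derives_preserves_order_and_solutions {F V Q : Type} {ar : F → ℕ}
    [Fintype F] [Fintype Q] [Fintype V]
    (A : DTA F ar Q) (C : V → Q) (n : ℕ) (Fm G : Formula F ar V)
    (hF : IsOrder A C n Fm) (hd : Derives A C Fm G) :
    IsOrder A C n G ∧ SolF A C G = SolF A C Fm :=
  derives_preserves_order_and_solutions_general A C n Fm G hF hd

end RITRC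
end

section
/- Let ⟨S,R⟩ be a set of terms with restricted regular constraints, R = ⟨A,V,C,W,h⟩, where A = ⟨Q,Σ,δ⟩ is a 1-or-(|S|+1) DTA and h ≥ |Q| + height(s). Let s ∈ T_Σ(V−W) be a term determined at all non-variable positions of the terms in S and structurally subsumed by all terms in S with respect to R. If ⟨{s},R⟩ has an instance not in L(⟨S,R⟩), and a variable x occurs at least twice in s with L(A,C(x)) infinite, then s has infinitely many instances not in L(⟨S,R⟩), all of them pairwise different on x (i.e., there are solutions φ_1, φ_2, … of R with each φ_i(s) ∉ L(⟨S,R⟩) and φ_i(x) ≠ φ_j(x) for i ≠ j). -/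
/-! Fix a solution `φ` with `sφ ∉ L(⟨S,R⟩)` and vary only `φ(x)` inside `L(A,C(x))`, which is
allowed since `x ∉ W`. If only finitely many values kept the instance outside `L(⟨S,R⟩)`,
infinitely many would put it into `L(⟨{t},R⟩)` for a single `t ∈ S`. Structural subsumption
forces every `ψ` with `sφ' = tψ` to send each variable `y` of `t` to `χ(y)φ'`, where `χ(y)` is
the subterm of `s` at the position of `y`; hence `s[x ← u] = (tχ)[x ← u]` for infinitely many
`u`. An equation between terms that holds for two values of `x` holds for all of them, in
particular for `φ(x)`. Values of unbounded height show that no `χ(y)` with `y ∈ W` contains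
`x`, so the height bounds are inherited and `sφ ∈ L(⟨{t},R⟩)`, a contradiction. -/

namespace RITRC

variable {F V V' Q : Type} {ar : F → ℕ}

section Development

variable {V'' : Type}

@[simp]
theorem Term.sub_nil (t : Term F ar V) : t.sub [] = some t := by
  cases t <;> rfl

theorem Term.sub_app_cons (f : F) (ts : Fin (ar f) → Term F ar V) (i : Fin (ar f))
    (p : List ℕ) : (Term.app f ts).sub (i.val :: p) = (ts i).sub p := by
  simp [Term.sub, i.isLt]

theorem Term.sub_subst (φ : V → Term F ar V') {p : List ℕ} :
    ∀ {t u : Term F ar V}, t.sub p = some u → (t.subst φ).sub p = some (u.subst φ) := by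
  induction p with
  | nil =>
    intro t u h
    rw [Term.sub_nil, Option.some.injEq] at h
    subst h
    exact Term.sub_nil _
  | cons i p ih =>
    intro t u h
    cases t with
    | var y => simp [Term.sub] at h
    | app f ts =>
      simp only [Term.sub] at h
      split_ifs at h with hi
      simpa [Term.subst, Term.sub, hi] using ih h

theorem Term.height_lt_app (f : F) (ts : Fin (ar f) → Term F ar V) (i : Fin (ar f)) :
    (ts i).height < (Term.app f ts).height :=
  Finset.le_sup (f := fun j => (ts j).height + 1) (Finset.mem_univ i)

theorem Term.height_lt_of_sub_cons {i : ℕ} {p : List ℕ} :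
    ∀ {t u : Term F ar V}, t.sub (i :: p) = some u → u.height < t.height := by
  induction p generalizing i with
  | nil =>
    intro t u h
    cases t with
    | var y => simp [Term.sub] at h
    | app f ts =>
      simp only [Term.sub] at h
      split_ifs at h with hi
      cases Option.some.inj h
      exact Term.height_lt_app f ts ⟨i, hi⟩
  | cons j p ih =>
    intro t u h
    cases t with
    | var y => simp [Term.sub] at h
    | app f ts =>
      simp only [Term.sub] at h
      split_ifs at h with hi
      exact (ih h).trans (Term.height_lt_app f ts ⟨i, hi⟩)

theorem Term.height_le_of_sub {t u : Term F ar V} {p : List ℕ} (h : t.sub p = some u) :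
    u.height ≤ t.height := by
  cases p with
  | nil =>
    rw [Term.sub_nil, Option.some.injEq] at h
    exact h ▸ le_rfl
  | cons i p => exact (Term.height_lt_of_sub_cons h).le

theorem Term.subst_congr {φ φ' : V → Term F ar V'} :
    ∀ {t : Term F ar V}, (∀ y, t.varOccurs y → φ y = φ' y) → t.subst φ = t.subst φ'
  | .var y, h => h y ⟨[], rfl⟩
  | .app f ts, h => by
    simp only [Term.subst]
    congr 1
    funext i
    exact Term.subst_congr fun y ⟨p, hp⟩ => h y ⟨i.val :: p, by rw [Term.sub_app_cons]; exact hp⟩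

theorem Term.subst_subst (σ : V → Term F ar V') (φ : V' → Term F ar V'') :
    ∀ t : Term F ar V, (t.subst σ).subst φ = t.subst (fun y => (σ y).subst φ)
  | .var _ => rfl
  | .app f ts => by
    simp only [Term.subst]
    exact congrArg _ (funext fun i => Term.subst_subst σ φ (ts i))

theorem DTA.run_subst (A : DTA F ar Q) {C : V → Q} {φ : V → GTerm F ar}
    (hφ : ∀ y, A.run (φ y) = some (C y)) : ∀ t : Term F ar V, A.run (t.subst φ) = A.runC C t
  | .var y => hφ y
  | .app f ts => by
    change A.runC _ _ = _
    simp only [Term.subst, DTA.runC]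
    exact congrArg (fun g => (allSome g).bind (A.δ f)) (funext fun i => A.run_subst hφ (ts i))

theorem Term.occursTwice.varOccurs {t : Term F ar V} {x : V} (h : t.occursTwice x) :
    t.varOccurs x :=
  let ⟨p, _, _, hp, _⟩ := h
  ⟨p, hp⟩

theorem Term.subst_eq_of_sub_eq {s t a : Term F ar V} {p : List ℕ} {y : V}
    {φ ψ : V → Term F ar V'} (hs : s.sub p = some a) (ht : t.sub p = some (.var y))
    (h : s.subst φ = t.subst ψ) : ψ y = a.subst φ := by
  have := Term.sub_subst ψ ht
  rwa [← h, Term.sub_subst φ hs, Option.some.injEq, eq_comm] at this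

theorem Term.height_le_height_subst {v : Term F ar V} {x : V} (hv : v.varOccurs x)
    (φ : V → Term F ar V') : (φ x).height ≤ (v.subst φ).height :=
  Term.height_le_of_sub (Term.sub_subst φ hv.choose_spec)

section Update

variable [DecidableEq V] {σ : V → GTerm F ar} {x : V}

theorem Term.subst_update_of_not_varOccurs {v : Term F ar V} (hv : ¬ v.varOccurs x)
    (t : GTerm F ar) : v.subst (Function.update σ x t) = v.subst σ :=
  Term.subst_congr fun y hy => Function.update_of_ne (by rintro rfl; exact hv hy) _ _

theorem Term.subst_update_injective {v : Term F ar V} (hv : v.varOccurs x) :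
    Function.Injective fun t : GTerm F ar => v.subst (Function.update σ x t) := by
  intro t₁ t₂ h
  obtain ⟨p, hp⟩ := hv
  simpa [Term.subst] using (Term.subst_eq_of_sub_eq hp hp h).symm

theorem Term.update_eq_subst_update_of_two {t₁ t₂ : GTerm F ar} (hne : t₁ ≠ t₂) {y : V}
    {v : Term F ar V} (h₁ : Function.update σ x t₁ y = v.subst (Function.update σ x t₁))
    (h₂ : Function.update σ x t₂ y = v.subst (Function.update σ x t₂)) (t : GTerm F ar) :
    Function.update σ x t y = v.subst (Function.update σ x t) := by
  by_cases hv : v.varOccurs x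
  · by_cases hyx : y = x
    · subst hyx
      obtain ⟨p, hp⟩ := hv
      cases p with
      | nil =>
        rw [Term.sub_nil, Option.some.injEq] at hp
        subst hp
        rfl
      | cons i p =>
        have := Term.height_lt_of_sub_cons (Term.sub_subst (Function.update σ y t₁) hp)
        simp [← h₁, Term.subst] at this
    · refine absurd (Term.subst_update_injective (σ := σ) hv ?_) hne
      simp [← h₁, ← h₂, Function.update_of_ne hyx]
  · rw [Term.subst_update_of_not_varOccurs hv] at h₁ h₂ ⊢
    by_cases hyx : y = x
    · subst hyx
      simp only [Function.update_self] at h₁ h₂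
      exact absurd (h₁.trans h₂.symm) hne
    · simpa [Function.update_of_ne hyx] using h₁

theorem Term.subst_update_eq_of_two {t₁ t₂ : GTerm F ar} (hne : t₁ ≠ t₂) :
    ∀ {u v : Term F ar V},
      u.subst (Function.update σ x t₁) = v.subst (Function.update σ x t₁) →
      u.subst (Function.update σ x t₂) = v.subst (Function.update σ x t₂) →
      ∀ t, u.subst (Function.update σ x t) = v.subst (Function.update σ x t)
  | .var _, _, h₁, h₂, t => Term.update_eq_subst_update_of_two hne h₁ h₂ t
  | .app _ _, .var _, h₁, h₂, t => (Term.update_eq_subst_update_of_two hne h₁.symm h₂.symm t).symm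
  | .app f us, .app g vs, h₁, h₂, t => by
    simp only [Term.subst] at h₁ h₂ ⊢
    injection h₁ with hf h₁
    subst hf
    injection h₂ with _ h₂
    congr 1
    funext i
    exact Term.subst_update_eq_of_two hne (congrFun (eq_of_heq h₁) i) (congrFun h₂ i) t

end Update

theorem finite_setOf_height_lt [Finite F] (n : ℕ) : {t : GTerm F ar | t.height < n}.Finite := by
  induction n with
  | zero => simp
  | succ n ih =>
    have : Finite {t : GTerm F ar // t.height < n} := ih.to_subtype
    refine (Set.finite_range fun d : Σ f : F, Fin (ar f) → {t : GTerm F ar // t.height < n} =>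
      Term.app d.1 fun i => (d.2 i).1).subset ?_
    rintro (⟨⟨⟩⟩ | ⟨f, ts⟩) ht
    have hts : ∀ i, (ts i).height < n := fun i =>
      (Term.height_lt_app f ts i).trans_le (Nat.lt_succ_iff.mp ht)
    exact ⟨⟨f, fun i => ⟨ts i, hts i⟩⟩, rfl⟩

theorem exists_mem_height_gt [Finite F] {T : Set (GTerm F ar)} (hT : T.Infinite)
    (n : ℕ) : ∃ t ∈ T, n < t.height := by
  obtain ⟨t, ht, hlt⟩ := hT.exists_notMem_finite (finite_setOf_height_lt (n + 1))
  exact ⟨t, ht, by simpa using hlt⟩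

theorem StructSub.exists_matcher {A : DTA F ar Q} {C : V → Q} {s t : Term F ar V}
    (h : StructSub A C s t) :
    ∃ χ : V → Term F ar V, ∀ y, t.varOccurs y →
      ∃ p, t.sub p = some (.var y) ∧ s.sub p = some (χ y) ∧ A.runC C (χ y) = some (C y) := by
  have : ∀ y, ∃ a : Term F ar V, t.varOccurs y →
      ∃ p, t.sub p = some (.var y) ∧ s.sub p = some a ∧ A.runC C a = some (C y) := by
    intro y
    by_cases hy : t.varOccurs y
    · obtain ⟨p, hp⟩ := hy
      obtain ⟨a, ha, hrun⟩ := h.2 p _ hp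
      exact ⟨a, fun _ => ⟨p, hp, ha, hrun.symm⟩⟩
    · exact ⟨.var y, fun h => absurd h hy⟩
  exact Classical.skolem.mp this

theorem RRC.lang_eq_biUnion (R : RRC F ar V Q) (S : Set (Term F ar V)) :
    R.lang S = ⋃ t ∈ S, R.lang {t} := by
  ext u
  simp [RRC.lang]

theorem RRC.exists_infinite_mem_lang_singleton {α : Type*} (R : RRC F ar V Q)
    {S : Finset (Term F ar V)} {T : Set α} (hT : T.Infinite) {g : α → GTerm F ar}
    (hg : ∀ u ∈ T, g u ∈ R.lang ↑S) : ∃ t ∈ S, {u ∈ T | g u ∈ R.lang {t}}.Infinite := by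
  by_contra! hfin
  refine hT ((S.finite_toSet.biUnion hfin).subset fun u hu => ?_)
  obtain ⟨t, ht, h⟩ := Set.mem_iUnion₂.mp (R.lang_eq_biUnion ↑S ▸ hg u hu)
  exact Set.mem_biUnion ht ⟨hu, h⟩

theorem RRC.IsSolution.update [DecidableEq V] {R : RRC F ar V Q} {φ : V → GTerm F ar}
    (hφ : R.IsSolution φ) {x : V} (hx : x ∉ R.W) {t : GTerm F ar}
    (ht : R.A.run t = some (R.C x)) : R.IsSolution (Function.update φ x t) := by
  refine ⟨fun y => ?_, fun y hy => ?_⟩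
  · rcases eq_or_ne y x with rfl | hyx
    · simpa using ht
    · simpa [Function.update_of_ne hyx] using hφ.1 y
  · have hyx : y ≠ x := by rintro rfl; exact hx hy
    simpa [Function.update_of_ne hyx] using hφ.2 y hy

theorem RRC.subst_mem_lang_singleton_of_infinite [Finite F] [DecidableEq V]
    {R : RRC F ar V Q} {s t : Term F ar V} (hst : StructSub R.A R.C s t)
    {φ : V → GTerm F ar} (hφ : ∀ y, R.A.run (φ y) = some (R.C y)) {x : V}
    {T : Set (GTerm F ar)} (hT : T.Infinite)
    (hTt : ∀ u ∈ T, s.subst (Function.update φ x u) ∈ R.lang {t}) :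
    s.subst φ ∈ R.lang {t} := by
  classical
  obtain ⟨χ, hχ⟩ := hst.exists_matcher
  have hforced : ∀ {φ' ψ : V → GTerm F ar}, s.subst φ' = t.subst ψ →
      ∀ y, t.varOccurs y → ψ y = (χ y).subst φ' := by
    intro φ' ψ h y hy
    obtain ⟨p, hpt, hps, -⟩ := hχ y hy
    exact Term.subst_eq_of_sub_eq hps hpt h
  have hmatch : ∀ u ∈ T, ∃ ψ, R.IsSolution ψ ∧
      s.subst (Function.update φ x u) = t.subst ψ := by
    intro u hu
    obtain ⟨_, rfl, ψ, hψ, h⟩ := hTt u hu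
    exact ⟨ψ, hψ, h⟩
  have hfactor : ∀ u ∈ T, s.subst (Function.update φ x u) =
      (t.subst χ).subst (Function.update φ x u) := by
    intro u hu
    obtain ⟨ψ, -, h⟩ := hmatch u hu
    rw [h, Term.subst_subst]
    exact Term.subst_congr (hforced h)
  obtain ⟨t₁, ht₁, t₂, ht₂, hne⟩ := hT.nontrivial
  have hφfactor : s.subst φ = (t.subst χ).subst φ := by
    simpa using Term.subst_update_eq_of_two hne (hfactor t₁ ht₁) (hfactor t₂ ht₂) (φ x)
  -- otherwise a value of `x` of height above `R.hgt` would occur in `ψ y` for some `y ∈ W`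
  have hfree : ∀ y ∈ R.W, t.varOccurs y → ¬ (χ y).varOccurs x := by
    intro y hyW hy hx
    obtain ⟨u, hu, hlt⟩ := exists_mem_height_gt hT R.hgt
    obtain ⟨ψ, hψ, h⟩ := hmatch u hu
    have := Term.height_le_height_subst hx (Function.update φ x u)
    rw [Function.update_self, ← hforced h y hy] at this
    exact absurd (hψ.2 y hyW) (by omega)
  obtain ⟨ψ₁, hψ₁, h₁⟩ := hmatch t₁ ht₁
  refine ⟨t, rfl, fun y => if t.varOccurs y then (χ y).subst φ else ψ₁ y,
    ⟨fun y => ?_, fun y hyW => ?_⟩, ?_⟩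
  · dsimp only
    split_ifs with hy
    · obtain ⟨-, -, -, hrun⟩ := hχ y hy
      rw [R.A.run_subst hφ, hrun]
    · exact hψ₁.1 y
  · dsimp only
    split_ifs with hy
    · rw [← Term.subst_update_of_not_varOccurs (hfree y hyW hy) t₁, ← hforced h₁ y hy]
      exact hψ₁.2 y hyW
    · exact hψ₁.2 y hyW
  · rw [hφfactor, Term.subst_subst]
    exact Term.subst_congr fun y hy => (if_pos hy).symm

end Development

theorem infinitely_many_instances_general {F V Q : Type} {ar : F → ℕ}
    [Fintype F]
    (R : RRC F ar V Q) (S : Finset (Term F ar V)) (s : Term F ar V)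
    (hsub : ∀ t ∈ S, StructSub R.A R.C s t)
    (hW : ∀ x : V, s.varOccurs x → x ∉ R.W)
    (hex : ∃ u : GTerm F ar, u ∈ R.lang {s} ∧ u ∉ R.lang ↑S)
    (x : V) (hx : s.occursTwice x) (hxinf : (R.A.lang (R.C x)).Infinite) :
    ∃ φs : ℕ → (V → GTerm F ar),
      (∀ i, R.IsSolution (φs i)) ∧
      (∀ i, s.subst (φs i) ∉ R.lang ↑S) ∧
      (∀ i j, i ≠ j → φs i x ≠ φs j x) := by
  classical
  obtain ⟨-, ⟨s', hs', φ, hφ, rfl⟩, hφS⟩ := hex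
  rw [Set.mem_singleton_iff.mp hs'] at hφS
  have hxW : x ∉ R.W := hW x hx.varOccurs
  have hT : {t ∈ R.A.lang (R.C x) | s.subst (Function.update φ x t) ∉ R.lang ↑S}.Infinite := by
    intro hfin
    obtain ⟨t, ht, htT⟩ := R.exists_infinite_mem_lang_singleton (hxinf.sdiff hfin)
      (g := fun u => s.subst (Function.update φ x u)) fun u ⟨hu, hnot⟩ => by
        by_contra h
        exact hnot ⟨hu, h⟩
    have hφt := R.subst_mem_lang_singleton_of_infinite (hsub t ht) hφ.1 htT fun u hu => hu.2
    exact hφS (R.lang_eq_biUnion ↑S ▸ Set.mem_biUnion ht hφt)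
  let e := hT.natEmbedding
  refine ⟨fun i => Function.update φ x (e i), fun i => hφ.update hxW (e i).2.1,
    fun i => (e i).2.2, fun i j hij => ?_⟩
  simpa using fun h => hij (e.injective (Subtype.ext h))

/-- let `A` be a 1-or-(|S|+1) DTA, `h ≥ |Q| + height(s)`,
`s ∈ T_Σ(V−W)` determined at all non-variable positions of terms in `S` and
structurally subsumed by all terms in `S`. If `⟨{s},R⟩` has an instance not in
`L(⟨S,R⟩)` and `x` occurs at least twice in `s` with `L(A,C(x))` infinite, then
there are infinitely many instances of `s` not in `L(⟨S,R⟩)`, pairwise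
different on `x`. -/
theorem infinitely_many_instances {F V Q : Type} {ar : F → ℕ}
    [Fintype F] [Fintype Q] [Fintype V]
    (R : RRC F ar V Q) (S : Finset (Term F ar V)) (s : Term F ar V)
    (h1 : R.A.OneOr (S.card + 1))
    (hh : Fintype.card Q + s.height ≤ R.hgt)
    (hdet : ∀ t ∈ S, ∀ p : List ℕ, Term.isNonVarPos t p → s.determinedAt p)
    (hsub : ∀ t ∈ S, StructSub R.A R.C s t)
    (hW : ∀ x : V, s.varOccurs x → x ∉ R.W)
    (hex : ∃ u : GTerm F ar, u ∈ R.lang {s} ∧ u ∉ R.lang ↑S)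
    (x : V) (hx : s.occursTwice x) (hxinf : (R.A.lang (R.C x)).Infinite) :
    ∃ φs : ℕ → (V → GTerm F ar),
      (∀ i, R.IsSolution (φs i)) ∧
      (∀ i, s.subst (φs i) ∉ R.lang ↑S) ∧
      (∀ i j, i ≠ j → φs i x ≠ φs j x) :=
  infinitely_many_instances_general R S s hsub hW hex x hx hxinf

end RITRC
end
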